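/- The Jacobi triple product identity: for complex q, z with 0 < |q| < 1 and z ≠ 0, ∑_{n=-∞}^{∞} q^{n^2} z^n = (q^2; q^2)_∞ (-zq; q^2)_∞ (-q/z; q^2)_∞. -/

import Mathlib

/-- Finite q-Pochhammer symbol: (a;q)_n = ∏_{k=0}^{n-1} (1 - a q^k). -/
noncomputable def qp (a q : ℂ) (n : ℕ) : ℂ := ∏ k ∈ Finset.range n, (1 - a * q ^ k)

/-- Infinite q-Pochhammer symbol: (a;q)_∞ = ∏_{k=0}^∞ (1 - a q^k). -/
noncomputable def qpInf (a q : ℂ) : ℂ := ∏' k : ℕ, (1 - a * q ^ k)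

/-!
Cauchy's finite form of the identity comes from the `q`-binomial theorem with `Q = q²`: the
`2N` factors `1 + z q^(2j+1-2N)` of `∏_{j<2N} (1 + z q^(1-2N) Q^j)` split into those with
`j ≥ N`, which give `(-zq; q²)_N`, and those with `j < N`, which give `z^N q^(-N²) (-q/z; q²)_N`,
so that `(-zq; q²)_N (-q/z; q²)_N = ∑_{|n| ≤ N} [2N, N+n]_{q²} q^(n²) z^n`.
For fixed `n`, the Gaussian binomial `[2N, N+n]_{q²}` tends to `1 / (q²; q²)_∞`, and all of them
are bounded because the finite products `(q²; q²)_m` converge to a nonzero limit. Since the theta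
series converges absolutely, dominated convergence for series lets `N → ∞`.
-/

open Finset Filter Topology

section GaussBinom

variable {R : Type*} [CommSemiring R]

def gaussBinom (Q : R) : ℕ → ℕ → R
  | _, 0 => 1
  | 0, _ + 1 => 0
  | m + 1, k + 1 => gaussBinom Q m k + Q ^ (k + 1) * gaussBinom Q m (k + 1)

@[simp] lemma gaussBinom_zero_right (Q : R) (m : ℕ) : gaussBinom Q m 0 = 1 := by
  cases m <;> rfl

lemma gaussBinom_succ_succ (Q : R) (m k : ℕ) :
    gaussBinom Q (m + 1) (k + 1) = gaussBinom Q m k + Q ^ (k + 1) * gaussBinom Q m (k + 1) :=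
  rfl

lemma gaussBinom_eq_zero_of_lt (Q : R) {m k : ℕ} (h : m < k) : gaussBinom Q m k = 0 := by
  induction m generalizing k with
  | zero => obtain ⟨k, rfl⟩ := Nat.exists_eq_succ_of_ne_zero h.ne'; rfl
  | succ m ih =>
    obtain ⟨k, rfl⟩ := Nat.exists_eq_succ_of_ne_zero (Nat.ne_zero_of_lt h)
    rw [gaussBinom_succ_succ, ih (by omega), ih (by omega), mul_zero, add_zero]

theorem prod_one_add_mul_pow_eq_sum_gaussBinom (Q x : R) (m : ℕ) :
    ∏ j ∈ range m, (1 + x * Q ^ j) =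
      ∑ k ∈ range (m + 1), Q ^ k.choose 2 * gaussBinom Q m k * x ^ k := by
  induction m generalizing x with
  | zero => simp
  | succ m ih =>
    set f : ℕ → R := fun k => Q ^ k.choose 2 * gaussBinom Q m k * (x * Q) ^ k with hf
    have hf_shift : ∑ k ∈ range (m + 1), f k = ∑ k ∈ range (m + 1), f (k + 1) + 1 := by
      have hlast : f (m + 1) = 0 := by simp [hf, gaussBinom_eq_zero_of_lt]
      rw [← add_zero (∑ k ∈ range (m + 1), f k), ← hlast, ← sum_range_succ, sum_range_succ']
      simp [hf]
    have hprod : ∏ j ∈ range (m + 1), (1 + x * Q ^ j) =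
        (∏ j ∈ range m, (1 + x * Q * Q ^ j)) * (1 + x) := by
      simp only [prod_range_succ', pow_succ', mul_assoc, pow_zero, mul_one]
    rw [hprod, ih, mul_add, mul_one, sum_mul, hf_shift, add_right_comm, ← sum_add_distrib,
      sum_range_succ' _ (m + 1)]
    congr 1
    · refine sum_congr rfl fun k _ => ?_
      simp only [hf, gaussBinom_succ_succ, Nat.choose_succ_succ', Nat.choose_one_right]
      ring
    · simp

end GaussBinom

lemma qp_succ (a q : ℂ) (n : ℕ) : qp a q (n + 1) = qp a q n * (1 - a * q ^ n) :=
  prod_range_succ _ n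

lemma gaussBinom_mul_qp_mul_qp (Q : ℂ) {m k : ℕ} (h : k ≤ m) :
    gaussBinom Q m k * (qp Q Q k * qp Q Q (m - k)) = qp Q Q m := by
  induction m generalizing k with
  | zero => obtain rfl := Nat.le_zero.mp h; simp [qp]
  | succ m ih =>
    rcases k with _ | k
    · simp [qp]
    rcases (Nat.le_of_succ_le_succ h).lt_or_eq with hk | rfl
    · obtain ⟨d, rfl⟩ := Nat.exists_eq_add_of_lt hk
      have h₀ := ih (k := k) (by omega)
      have h₁ := ih (k := k + 1) (by omega)
      rw [show k + d + 1 - k = d + 1 by omega] at h₀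
      rw [show k + d + 1 - (k + 1) = d by omega] at h₁
      rw [show k + d + 1 + 1 - (k + 1) = d + 1 by omega, gaussBinom_succ_succ,
        qp_succ _ _ (k + d + 1)]
      simp only [qp_succ] at h₀ h₁ ⊢
      linear_combination (1 - Q * Q ^ k) * h₀ + Q ^ (k + 1) * (1 - Q * Q ^ d) * h₁
    · have h₀ := ih (k := k) le_rfl
      rw [Nat.sub_self] at h₀
      rw [Nat.sub_self, gaussBinom_succ_succ, gaussBinom_eq_zero_of_lt Q (Nat.lt_succ_self k),
        qp_succ]
      linear_combination (1 - Q * Q ^ k) * h₀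

section FiniteIdentity

open Complex

/- With `q = exp t` and `z = exp s`, every monomial identity below is a linear identity between
exponents; `exp (s + t - 2 * N * t)` is `z q^(1-2N)`. -/
lemma prod_range_two_mul_eq_qp_mul_qp (s t : ℂ) (N : ℕ) :
    ∏ j ∈ range (2 * N), (1 + exp (s + t - 2 * N * t) * (exp t ^ 2) ^ j) =
      exp (N * s - N ^ 2 * t) *
        (qp (-(exp s * exp t)) (exp t ^ 2) N * qp (-(exp t / exp s)) (exp t ^ 2) N) := by
  have hsum : ∑ i ∈ range N, (s - (2 * i + 1) * t) = N * s - N ^ 2 * t := by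
    induction N with
    | zero => simp
    | succ N ih => rw [sum_range_succ, ih]; push_cast; ring
  have hupper : ∀ i ∈ range N, 1 + exp (s + t - 2 * N * t) * (exp t ^ 2) ^ (N + i) =
      1 - -(exp s * exp t) * (exp t ^ 2) ^ i := fun i _ => by
    rw [neg_mul, sub_neg_eq_add]
    simp only [← exp_nat_mul, ← Complex.exp_add]
    congr 2; push_cast; ring
  have hlower : ∀ i ∈ range N, 1 + exp (s + t - 2 * N * t) * (exp t ^ 2) ^ (N - 1 - i) =
      exp (s - (2 * i + 1) * t) * (1 - -(exp t / exp s) * (exp t ^ 2) ^ i) := fun i hi => by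
    have hcast : ((N - 1 - i : ℕ) : ℂ) = N - 1 - i := by
      rw [Nat.sub_sub, Nat.cast_sub (by have := mem_range.mp hi; omega)]; push_cast; ring
    have h₁ : exp (s + t - 2 * N * t) * (exp t ^ 2) ^ (N - 1 - i) = exp (s - (2 * i + 1) * t) := by
      simp only [← exp_nat_mul, ← Complex.exp_add, hcast]
      congr 1; push_cast; ring
    have h₂ : exp (s - (2 * i + 1) * t) * (exp t / exp s * (exp t ^ 2) ^ i) = 1 := by
      simp only [← exp_nat_mul, ← Complex.exp_add, ← Complex.exp_sub]
      convert exp_zero using 2; push_cast; ring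
    linear_combination h₁ - h₂
  rw [two_mul, prod_range_add, ← prod_range_reflect, prod_congr rfl hlower, prod_congr rfl hupper,
    prod_mul_distrib, ← exp_sum, hsum, qp, qp]
  ring

theorem qp_mul_qp_eq_sum_gaussBinom {q z : ℂ} (hq : q ≠ 0) (hz : z ≠ 0) (N : ℕ) :
    qp (-(z * q)) (q ^ 2) N * qp (-(q / z)) (q ^ 2) N =
      ∑ n ∈ Icc (-(N : ℤ)) N, gaussBinom (q ^ 2) (2 * N) (n + N).toNat * (q ^ (n ^ 2) * z ^ n) := by
  obtain ⟨t, rfl⟩ : ∃ t, exp t = q := ⟨log q, exp_log hq⟩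
  obtain ⟨s, rfl⟩ : ∃ s, exp s = z := ⟨log z, exp_log hz⟩
  have hterm : ∀ k : ℕ, (exp t ^ 2) ^ k.choose 2 * exp (s + t - 2 * N * t) ^ k =
      exp (N * s - N ^ 2 * t) * (exp t ^ (((k : ℤ) - N) ^ 2) * exp s ^ ((k : ℤ) - N)) := by
    intro k
    simp only [← exp_nat_mul, ← exp_int_mul, ← Complex.exp_add]
    congr 1
    push_cast [Nat.cast_choose_two]
    ring
  apply mul_left_cancel₀ (exp_ne_zero (N * s - N ^ 2 * t))
  rw [← prod_range_two_mul_eq_qp_mul_qp, prod_one_add_mul_pow_eq_sum_gaussBinom, mul_sum]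
  refine sum_nbij' (fun k => (k : ℤ) - N) (fun n => (n + N).toNat) ?_ ?_ ?_ ?_ ?_ <;>
    intro k hk <;> simp only [mem_range, mem_Icc] at hk ⊢
  iterate 4 omega
  rw [show ((k : ℤ) - N + N).toNat = k by omega, mul_right_comm, hterm]
  ring

end FiniteIdentity

section Analytic

variable {Q : ℂ}

lemma one_sub_mul_pow_ne_zero (hQ : ‖Q‖ < 1) (k : ℕ) : 1 - Q * Q ^ k ≠ 0 := by
  rw [sub_ne_zero, ne_comm, ← pow_succ']
  refine fun h => (pow_lt_one₀ (norm_nonneg Q) hQ k.succ_ne_zero).ne ?_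
  rw [← norm_pow, h, norm_one]

lemma summable_norm_mul_pow (a : ℂ) (hQ : ‖Q‖ < 1) : Summable fun k : ℕ => ‖a * Q ^ k‖ := by
  simpa only [norm_mul, norm_pow] using
    (summable_geometric_of_lt_one (norm_nonneg Q) hQ).mul_left ‖a‖

lemma tendsto_qp_qpInf (a : ℂ) (hQ : ‖Q‖ < 1) : Tendsto (qp a Q) atTop (𝓝 (qpInf a Q)) := by
  have h := multipliable_one_add_of_summable (f := fun k => -(a * Q ^ k))
    (by simpa only [norm_neg] using summable_norm_mul_pow a hQ)
  simp only [← sub_eq_add_neg] at h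
  exact h.hasProd.tendsto_prod_nat

lemma qp_self_ne_zero (hQ : ‖Q‖ < 1) (n : ℕ) : qp Q Q n ≠ 0 :=
  prod_ne_zero_iff.mpr fun k _ => one_sub_mul_pow_ne_zero hQ k

lemma qpInf_self_ne_zero (hQ : ‖Q‖ < 1) : qpInf Q Q ≠ 0 := by
  simp only [qpInf, sub_eq_add_neg]
  refine tprod_one_add_ne_zero_of_summable (fun k => ?_) ?_
  · rw [← sub_eq_add_neg]; exact one_sub_mul_pow_ne_zero hQ k
  · simpa only [norm_neg] using summable_norm_mul_pow Q hQ

lemma gaussBinom_eq_div (hQ : ‖Q‖ < 1) {m k : ℕ} (h : k ≤ m) :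
    gaussBinom Q m k = qp Q Q m / (qp Q Q k * qp Q Q (m - k)) :=
  eq_div_of_mul_eq (mul_ne_zero (qp_self_ne_zero hQ _) (qp_self_ne_zero hQ _))
    (gaussBinom_mul_qp_mul_qp Q h)

lemma exists_norm_gaussBinom_le (hQ : ‖Q‖ < 1) : ∃ C, ∀ m k, ‖gaussBinom Q m k‖ ≤ C := by
  have hlim := tendsto_qp_qpInf Q hQ
  obtain ⟨A, hA⟩ := hlim.norm.bddAbove_range
  obtain ⟨B, hB⟩ := (hlim.inv₀ (qpInf_self_ne_zero hQ)).norm.bddAbove_range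
  replace hA n : ‖qp Q Q n‖ ≤ A := hA (Set.mem_range_self n)
  replace hB n : ‖(qp Q Q n)⁻¹‖ ≤ B := hB (Set.mem_range_self n)
  have hA0 : 0 ≤ A := (norm_nonneg _).trans (hA 0)
  have hB0 : 0 ≤ B := (norm_nonneg _).trans (hB 0)
  refine ⟨A * B * B, fun m k => ?_⟩
  rcases le_or_gt k m with h | h
  · rw [gaussBinom_eq_div hQ h, div_eq_mul_inv, mul_inv, ← mul_assoc, norm_mul, norm_mul]
    exact mul_le_mul (mul_le_mul (hA m) (hB k) (norm_nonneg _) hA0) (hB _) (norm_nonneg _)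
      (mul_nonneg hA0 hB0)
  · rw [gaussBinom_eq_zero_of_lt Q h, norm_zero]
    exact mul_nonneg (mul_nonneg hA0 hB0) hB0

lemma tendsto_gaussBinom {α : Type*} {l : Filter α} (hQ : ‖Q‖ < 1) {m k : α → ℕ}
    (hk : Tendsto k l atTop) (hmk : Tendsto (fun i => m i - k i) l atTop) :
    Tendsto (fun i => gaussBinom Q (m i) (k i)) l (𝓝 (qpInf Q Q)⁻¹) := by
  have hlim := tendsto_qp_qpInf Q hQ
  have hm : Tendsto m l atTop := tendsto_atTop_mono (fun i => Nat.sub_le _ _) hmk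
  have hP := qpInf_self_ne_zero hQ
  have h := (hlim.comp hm).div ((hlim.comp hk).mul (hlim.comp hmk)) (mul_ne_zero hP hP)
  rw [div_mul_cancel_left₀ hP] at h
  refine h.congr' ?_
  filter_upwards [hmk.eventually_ge_atTop 1] with i hi
  exact (gaussBinom_eq_div hQ (by omega)).symm

end Analytic

section Theta

open Complex

lemma pow_sq_mul_zpow_eq_jacobiTheta₂_term {q z : ℂ} (hq : q ≠ 0) (hz : z ≠ 0) (n : ℤ) :
    q ^ (n ^ 2) * z ^ n =
      jacobiTheta₂_term n (log z / (2 * Real.pi * I)) (log q / (Real.pi * I)) := by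
  have hπ : (Real.pi : ℂ) ≠ 0 := ofReal_ne_zero.mpr Real.pi_ne_zero
  have harg : 2 * Real.pi * I * n * (log z / (2 * Real.pi * I)) +
      Real.pi * I * n ^ 2 * (log q / (Real.pi * I)) = ((n ^ 2 : ℤ) : ℂ) * log q + n * log z := by
    push_cast; field_simp; ring
  rw [jacobiTheta₂_term, harg, Complex.exp_add, exp_int_mul, exp_int_mul, exp_log hq, exp_log hz]

lemma summable_norm_pow_sq_mul_zpow {q z : ℂ} (hq0 : q ≠ 0) (hq : ‖q‖ < 1) (hz : z ≠ 0) :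
    Summable fun n : ℤ => ‖q ^ (n ^ 2) * z ^ n‖ := by
  have him : 0 < (log q / (Real.pi * I)).im := by
    simp only [div_mul_eq_div_div, div_I, neg_im, mul_im, I_re, I_im, div_ofReal_re,
      div_ofReal_im, log_re, mul_zero, mul_one, add_zero, neg_pos]
    exact div_neg_of_neg_of_pos (Real.log_neg (norm_pos_iff.mpr hq0) hq) Real.pi_pos
  simp only [pow_sq_mul_zpow_eq_jacobiTheta₂_term hq0 hz]
  exact summable_norm_iff.mpr ((summable_jacobiTheta₂_term_iff _ _).mpr him)

end Theta

lemma tendsto_sum_Icc_mul_of_tendsto_one {R : Type*} [NormedRing R] [CompleteSpace R]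
    {a : ℤ → R} (ha : Summable fun n => ‖a n‖) {c : ℕ → ℤ → R} {C : ℝ}
    (hc : ∀ N n, ‖c N n‖ ≤ C) (hlim : ∀ n, Tendsto (c · n) atTop (𝓝 1)) :
    Tendsto (fun N : ℕ => ∑ n ∈ Icc (-(N : ℤ)) N, c N n * a n) atTop (𝓝 (∑' n, a n)) := by
  have hC : 0 ≤ C := (norm_nonneg _).trans (hc 0 0)
  refine (tendsto_tsum_of_dominated_convergence (f := fun (N : ℕ) (n : ℤ) =>
      if n ∈ Icc (-(N : ℤ)) N then c N n * a n else 0) (ha.mul_left C) (fun n => ?_)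
      (.of_forall fun N n => ?_)).congr fun N => ?_
  · have hmem : ∀ᶠ N : ℕ in atTop, n ∈ Icc (-(N : ℤ)) N :=
      (eventually_ge_atTop n.natAbs).mono fun N hN => by simp only [mem_Icc]; omega
    simpa only [one_mul] using ((hlim n).mul_const (a n)).congr' <|
      hmem.mono fun N hN => (if_pos hN).symm
  · split_ifs
    · exact (norm_mul_le _ _).trans (mul_le_mul_of_nonneg_right (hc N n) (norm_nonneg _))
    · rw [norm_zero]; positivity
  · exact (tsum_eq_sum fun n hn => if_neg hn).trans (sum_congr rfl fun n hn => if_pos hn)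

/-- The Jacobi triple product identity. -/
theorem jacobi_triple_product (q z : ℂ) (hq0 : 0 < ‖q‖) (hq : ‖q‖ < 1)
    (hz : z ≠ 0) :
    HasSum (fun n : ℤ => q ^ (n ^ 2) * z ^ n)
      (qpInf (q ^ 2) (q ^ 2) * qpInf (-(z * q)) (q ^ 2) * qpInf (-(q / z)) (q ^ 2)) := by
  have hq_ne : q ≠ 0 := norm_pos_iff.mp hq0
  have hQ : ‖q ^ 2‖ < 1 := by rw [norm_pow]; exact pow_lt_one₀ (norm_nonneg q) hq two_ne_zero
  have hsum := summable_norm_pow_sq_mul_zpow hq_ne hq hz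
  obtain ⟨C, hC⟩ := exists_norm_gaussBinom_le hQ
  set P := qpInf (q ^ 2) (q ^ 2)
  have hlim : ∀ n : ℤ, Tendsto (fun N : ℕ => P * gaussBinom (q ^ 2) (2 * N) (n + N).toNat)
      atTop (𝓝 1) := fun n => by
    rw [← mul_inv_cancel₀ (qpInf_self_ne_zero hQ)]
    refine tendsto_const_nhds.mul (tendsto_gaussBinom hQ ?_ ?_) <;>
      exact tendsto_atTop_atTop.mpr fun b => ⟨b + n.natAbs, fun N hN => by omega⟩
  have htannery := tendsto_sum_Icc_mul_of_tendsto_one hsum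
    (fun N n => (norm_mul_le _ _).trans (mul_le_mul_of_nonneg_left (hC _ _) (norm_nonneg P))) hlim
  have hprod : Tendsto (fun N : ℕ => ∑ n ∈ Icc (-(N : ℤ)) N,
      P * gaussBinom (q ^ 2) (2 * N) (n + N).toNat * (q ^ (n ^ 2) * z ^ n)) atTop
      (𝓝 (P * (qpInf (-(z * q)) (q ^ 2) * qpInf (-(q / z)) (q ^ 2)))) := by
    simp only [mul_assoc, ← mul_sum, ← qp_mul_qp_eq_sum_gaussBinom hq_ne hz]
    exact tendsto_const_nhds.mul ((tendsto_qp_qpInf _ hQ).mul (tendsto_qp_qpInf _ hQ))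
  rw [mul_assoc, ← tendsto_nhds_unique htannery hprod]
  exact (summable_norm_iff.mp hsum).hasSum
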